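/- arXiv:2510.08977 — 2 statements merged into one kernel-verified Lean document; each statement's English description precedes it below -/
import Mathlib

section
/- (Soft beats hard, sufficiency) Let q be a probability vector with MAP label m, true label t ≠ m, a = q_t, b = q_m, and s_max = max over labels j ∉ {m,t} of q_j. Assume 0 < a, 0 < b < 1, a < 1, and S₃ − S₂² > 0. If a ≥ s_max, then ρ(r^S, r*) ≥ ρ(r^H, r*), i.e., −a(S₂−a)/√(a(1−a)(S₃−S₂²)) ≥ −√(ab/((1−a)(1−b))). -/
/-- Soft beats hard (sufficiency, Theorem 1): if the true-label probability
    `a = q t` is at least every non-majority probability `s_max`, then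
    `ρ(r^S, r*) ≥ ρ(r^H, r*)`. -/
theorem stmt_9 (L : ℕ) (q : Fin L → ℝ)
    (hnn : ∀ j, 0 ≤ q j) (hsum : ∑ j, q j = 1)
    (m t : Fin L) (hm : ∀ j, q j ≤ q m) (hmt : t ≠ m)
    (a b S₂ S₃ : ℝ) (ha : a = q t) (hb : b = q m)
    (hS2 : S₂ = ∑ j, (q j) ^ 2) (hS3 : S₃ = ∑ j, (q j) ^ 3)
    (ha0 : 0 < a) (ha1 : a < 1) (hb0 : 0 < b) (hb1 : b < 1)
    (hvar : 0 < S₃ - S₂ ^ 2)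
    (hsmax : ∀ j, j ≠ m → j ≠ t → q j ≤ a) :
    -(a * (S₂ - a)) / Real.sqrt (a * (1 - a) * (S₃ - S₂ ^ 2))
      ≥ -Real.sqrt (a * b / ((1 - a) * (1 - b))) := by
  have hmem : m ∈ Finset.univ (α := Fin L) := Finset.mem_univ m
  set s : Finset (Fin L) := Finset.univ.erase m with hs
  have hab : a ≤ b := by rw [ha, hb]; exact hm t
  have h1a : (0:ℝ) < 1 - a := by linarith
  have h1b : (0:ℝ) < 1 - b := by linarith
  -- sum over non-majority labels
  have hsum_s : ∑ j ∈ s, q j = 1 - b := by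
    rw [hs, Finset.sum_erase_eq_sub hmem, hsum, hb]
  have hsum2_s : ∑ j ∈ s, (q j) ^ 2 = S₂ - b ^ 2 := by
    rw [hs, Finset.sum_erase_eq_sub hmem, ← hS2, hb]
  -- every non-majority probability is ≤ a
  have hqa : ∀ j, j ≠ m → q j ≤ a := by
    intro j hj
    by_cases hjt : j = t
    · rw [hjt, ← ha]
    · exact hsmax j hj hjt
  -- S₂ ≤ b² + a(1-b)
  have hS2b : S₂ ≤ b ^ 2 + a * (1 - b) := by
    have h : ∑ j ∈ s, (q j) ^ 2 ≤ ∑ j ∈ s, a * q j := by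
      apply Finset.sum_le_sum
      intro j hj
      have hjm : j ≠ m := Finset.ne_of_mem_erase hj
      have := hqa j hjm
      nlinarith [hnn j]
    rw [hsum2_s, ← Finset.mul_sum, hsum_s] at h
    linarith
  have hS2leb : S₂ ≤ b := by nlinarith
  -- variance identity
  have hVar : S₃ - S₂ ^ 2 = ∑ j, q j * (q j - S₂) ^ 2 := by
    have h : ∑ j, q j * (q j - S₂) ^ 2
        = (∑ j, (q j) ^ 3) - 2 * S₂ * (∑ j, (q j) ^ 2) + S₂ ^ 2 * (∑ j, q j) := by
      rw [Finset.mul_sum, Finset.mul_sum, ← Finset.sum_sub_distrib, ← Finset.sum_add_distrib]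
      apply Finset.sum_congr rfl
      intro j _
      ring
    rw [hsum, ← hS2, ← hS3] at h
    rw [h]; ring
  -- Cauchy–Schwarz on the non-majority labels
  have hcs : (∑ j ∈ s, q j * (q j - S₂)) ^ 2
      ≤ (∑ j ∈ s, q j) * (∑ j ∈ s, q j * (q j - S₂) ^ 2) := by
    have h := Finset.sum_mul_sq_le_sq_mul_sq s (fun j => Real.sqrt (q j))
      (fun j => Real.sqrt (q j) * (q j - S₂))
    have e1 : ∀ j ∈ s, Real.sqrt (q j) * (Real.sqrt (q j) * (q j - S₂))
        = q j * (q j - S₂) := by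
      intro j _; rw [← mul_assoc, Real.mul_self_sqrt (hnn j)]
    have e2 : ∀ j ∈ s, Real.sqrt (q j) ^ 2 = q j := by
      intro j _; exact Real.sq_sqrt (hnn j)
    have e3 : ∀ j ∈ s, (Real.sqrt (q j) * (q j - S₂)) ^ 2 = q j * (q j - S₂) ^ 2 := by
      intro j _; rw [mul_pow, Real.sq_sqrt (hnn j)]
    rw [Finset.sum_congr rfl e1, Finset.sum_congr rfl e2, Finset.sum_congr rfl e3] at h
    exact h
  -- compute the first sum
  have hE : ∑ j ∈ s, q j * (q j - S₂) = b * S₂ - b ^ 2 := by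
    have : ∑ j ∈ s, q j * (q j - S₂)
        = (∑ j ∈ s, (q j) ^ 2) - S₂ * (∑ j ∈ s, q j) := by
      rw [Finset.mul_sum, ← Finset.sum_sub_distrib]
      apply Finset.sum_congr rfl
      intro j _; ring
    rw [this, hsum2_s, hsum_s]; ring
  -- variance decomposition
  have hVdec : ∑ j ∈ s, q j * (q j - S₂) ^ 2
      = (S₃ - S₂ ^ 2) - b * (b - S₂) ^ 2 := by
    rw [hVar, hs, Finset.sum_erase_eq_sub hmem, ← hb]
  -- key variance lower bound: b(b-S₂)² ≤ (1-b)(S₃-S₂²)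
  have key2 : b * (b - S₂) ^ 2 ≤ (1 - b) * (S₃ - S₂ ^ 2) := by
    rw [hE, hsum_s, hVdec] at hcs
    nlinarith [hcs]
  -- key linear bound
  have key1 : (S₂ - a) * (1 - b) ≤ b * (b - S₂) := by nlinarith
  -- now conclude
  rcases le_or_gt S₂ a with h | h
  · -- LHS ≥ 0 ≥ RHS
    have hl : 0 ≤ -(a * (S₂ - a)) / Real.sqrt (a * (1 - a) * (S₃ - S₂ ^ 2)) := by
      apply div_nonneg _ (Real.sqrt_nonneg _)
      nlinarith
    have hr : -Real.sqrt (a * b / ((1 - a) * (1 - b))) ≤ 0 :=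
      neg_nonpos.mpr (Real.sqrt_nonneg _)
    linarith
  · -- squaring case
    have key3 : (S₂ - a) ^ 2 * (1 - b) ≤ b * (S₃ - S₂ ^ 2) := by
      have h0 : 0 < (S₂ - a) * (1 - b) := mul_pos (by linarith) h1b
      have hbs : 0 ≤ b * (b - S₂) := le_trans h0.le key1
      have hsq : ((S₂ - a) * (1 - b)) ^ 2 ≤ (b * (b - S₂)) ^ 2 :=
        pow_le_pow_left₀ h0.le key1 2
      nlinarith [key2, hsq, sq_nonneg (b - S₂)]
    have hD : 0 < a * (1 - a) * (S₃ - S₂ ^ 2) := by positivity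
    have hR : 0 ≤ a * b / ((1 - a) * (1 - b)) := by positivity
    rw [ge_iff_le, neg_div, neg_le_neg_iff]
    rw [div_le_iff₀ (Real.sqrt_pos.mpr hD)]
    rw [← Real.sqrt_mul hR]
    have hx : (0:ℝ) < a * (S₂ - a) := mul_pos ha0 (by linarith)
    apply (Real.le_sqrt' hx).mpr
    rw [div_mul_eq_mul_div, le_div_iff₀ (by positivity)]
    have hmul := mul_le_mul_of_nonneg_left key3
      (by positivity : (0:ℝ) ≤ a ^ 2 * (1 - a))
    calc (a * (S₂ - a)) ^ 2 * ((1 - a) * (1 - b))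
        = a ^ 2 * (1 - a) * ((S₂ - a) ^ 2 * (1 - b)) := by ring
      _ ≤ a ^ 2 * (1 - a) * (b * (S₃ - S₂ ^ 2)) := hmul
      _ = a * b * (a * (1 - a) * (S₃ - S₂ ^ 2)) := by ring
end

section
/- (Necessity direction of Theorem 1, concentrated tail) Suppose L ≥ 3 and a = q_t, b = q_m, and the tail mass o = 1 − a − b is concentrated on a single label s, so q_s = o. If a < o (true-label probability below the concentrated tail probability), and all quantities are such that both correlations are defined (0<a<1, 0<b<1, S₃−S₂²>0), then ρ(r^S, r*) < ρ(r^H, r*). -/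
/-- Necessity direction of Theorem 1 (concentrated tail): with support on three
    labels `t, m, s`, if `a = q t < o = q s` then the soft-reward correlation is
    strictly smaller than the hard-reward correlation. -/
theorem stmt_17 (L : ℕ) (hL : 3 ≤ L) (t m s : Fin L)
    (htm : t ≠ m) (hst : s ≠ t) (hsm : s ≠ m)
    (a b o : ℝ) (habo : a + b + o = 1)
    (q : Fin L → ℝ)
    (hq : q = fun j => if j = t then a else if j = m then b else
      if j = s then o else 0)
    (hqt : q t = a) (hqm : q m = b) (hqs : q s = o)
    (hba : a ≤ b) (hbo : o ≤ b)
    (ha0 : 0 < a) (ha1 : a < 1) (hb0 : 0 < b) (hb1 : b < 1)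
    (S₂ S₃ : ℝ) (hS2 : S₂ = a ^ 2 + b ^ 2 + o ^ 2) (hS3 : S₃ = a ^ 3 + b ^ 3 + o ^ 3)
    (hvar : 0 < S₃ - S₂ ^ 2)
    (hao : a < o) :
    -(a * (S₂ - a)) / Real.sqrt (a * (1 - a) * (S₃ - S₂ ^ 2))
      < -Real.sqrt (a * b / ((1 - a) * (1 - b))) := by
  have ha1' : (0:ℝ) < 1 - a := by linarith
  have hb1' : (0:ℝ) < 1 - b := by linarith
  have ho0 : 0 < o := lt_trans ha0 hao
  have h3b : 1 < 3 * b := by linarith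
  -- the key polynomial inequality
  have hE : 0 < (1 - b) * (S₂ - a) ^ 2 - b * (S₃ - S₂ ^ 2) := by
    have hfac : (1 - b) * (S₂ - a) ^ 2 - b * (S₃ - S₂ ^ 2)
        = o * (o - a) * (b * (3 * b - 1) + o * (o - a)) := by
      have ho : o = 1 - a - b := by linarith
      subst ho hS2 hS3; ring
    rw [hfac]
    have h1 : 0 < o * (o - a) := mul_pos ho0 (by linarith)
    have h2 : 0 < b * (3 * b - 1) := mul_pos hb0 (by linarith)
    positivity
  -- S₂ > a
  have hS2a : a < S₂ := by nlinarith [sq_nonneg (a - b), sq_nonneg (a - o), sq_nonneg (b - o)]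
  have hN : 0 < a * (S₂ - a) := mul_pos ha0 (by linarith)
  have hD : 0 < a * (1 - a) * (S₃ - S₂ ^ 2) := by positivity
  have hR0 : (0:ℝ) ≤ a * b / ((1 - a) * (1 - b)) := by positivity
  rw [neg_div, neg_lt_neg_iff, lt_div_iff₀ (Real.sqrt_pos.2 hD),
    ← Real.sqrt_mul hR0, Real.sqrt_lt' hN]
  rw [div_mul_eq_mul_div, div_lt_iff₀ (by positivity : (0:ℝ) < (1 - a) * (1 - b))]
  nlinarith [mul_pos (mul_pos (mul_pos ha0 ha0) ha1') hE]
end
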